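/- arXiv:1702.03101 — 2 statements merged into one kernel-verified Lean document; each statement's English description precedes it below -/
import Mathlib

section
/- For the swap network F on n automata (n even, f_i(x) = x_{i+n/2} for i < n/2, f_i(x) = x_{i-n/2} for i ≥ n/2) with sequential schedule W = ({0},...,{n-1}), the chromatic number of G_NECC(F,W) is at least 2^{n/2}, hence κ(F,W) ≥ n/2. -/
/-- A configuration of a Boolean automata network of size `n`. -/
abbrev Conf (n : ℕ) := Fin n → Bool

/-- `F_I`: update simultaneously exactly the automata in `I`. -/
def updSet {n : ℕ} (F : Conf n → Conf n) (I : Finset (Fin n)) (x : Conf n) : Conf n :=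
  fun i => if i ∈ I then F x i else x i

/-- `W_{<j}`: union of the first `j` blocks of the schedule `W`. -/
def prefUnion {n : ℕ} (W : List (Finset (Fin n))) (j : ℕ) : Finset (Fin n) :=
  (W.take j).foldr (· ∪ ·) ∅

/-- `W` is a block-sequential update schedule: an ordered partition of the automata. -/
def isSchedule {n : ℕ} (W : List (Finset (Fin n))) : Prop :=
  (∀ B ∈ W, B.Nonempty) ∧ W.Pairwise Disjoint ∧ W.foldr (· ∪ ·) ∅ = Finset.univ

/-- Confusable configurations: identical after updating the first `i` blocks, some `i ∈ [0,p]`. -/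
def confusable {n : ℕ} (F : Conf n → Conf n) (W : List (Finset (Fin n))) (x x' : Conf n) : Prop :=
  ∃ i ≤ W.length, updSet F (prefUnion W i) x = updSet F (prefUnion W i) x'

/-- `CC(x,x')`: the set of steps making `x` and `x'` confusable. -/
def CCset {n : ℕ} (F : Conf n → Conf n) (W : List (Finset (Fin n))) (x x' : Conf n) : Set ℕ :=
  {i | i ≤ W.length ∧ updSet F (prefUnion W i) x = updSet F (prefUnion W i) x'}

/-- The `G_NECC` graph: edges between non-equivalent confusable configurations. -/
def gnecc {n : ℕ} (F : Conf n → Conf n) (W : List (Finset (Fin n))) :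
    SimpleGraph (Conf n) where
  Adj x x' := F x ≠ F x' ∧ confusable F W x x'
  symm := ⟨by
    rintro x x' ⟨hne, i, hi, h⟩
    exact ⟨hne.symm, i, hi, h.symm⟩⟩
  loopless := ⟨by rintro x ⟨hne, _⟩; exact hne rfl⟩

/-- `F^W`: apply the blocks of `W` sequentially. -/
def runSched {n : ℕ} (F : Conf n → Conf n) (W : List (Finset (Fin n))) (x : Conf n) : Conf n :=
  W.foldl (fun y B => updSet F B y) x

/-- `W(i)`: the index of the block of `W` containing `i`. -/
def stepOf {n : ℕ} (W : List (Finset (Fin n))) (i : Fin n) : ℕ :=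
  W.findIdx (fun B => decide (i ∈ B))

/-- `W' ∈ E_h(W,V')`: `W'` extends `W`, preserving the update order via `h`. -/
def extendsSched {n m : ℕ} (W : List (Finset (Fin n))) (W' : List (Finset (Fin m)))
    (h : Fin n → Fin m) : Prop :=
  ∀ i i' : Fin n, (stepOf W i ≤ stepOf W i' ↔ stepOf W' (h i) ≤ stepOf W' (h i'))

/-- `(F',W')` `h`-simulates `(F,[V])`: `φ_h ∘ F'^{W'} = F ∘ φ_h`. -/
def simulates {n m : ℕ} (F' : Conf m → Conf m) (W' : List (Finset (Fin m)))
    (F : Conf n → Conf n) (h : Fin n → Fin m) : Prop :=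
  ∀ z : Conf m, (fun i => runSched F' W' z (h i)) = F (fun i => z (h i))

/-- `κ(F,W)`: minimal number of additional automata needed to simulate `(F,[V])`
with a schedule extending `W` order-preservingly. -/
noncomputable def kappa {n : ℕ} (F : Conf n → Conf n) (W : List (Finset (Fin n))) : ℕ :=
  sInf {k | ∃ h : Fin n → Fin (n + k), Function.Injective h ∧
    ∃ W' : List (Finset (Fin (n + k))), isSchedule W' ∧ extendsSched W W' h ∧
      ∃ F' : Conf (n + k) → Conf (n + k), simulates F' W' F h}

/-- The simple sequential update schedule `({0},{1},…,{n-1})`. -/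
def seqSched (n : ℕ) : List (Finset (Fin n)) := (List.finRange n).map (fun i => {i})

/-- The swap network: automata `i` and `i + n/2` exchange their values. -/
def swapF (n : ℕ) (hn : Even n) : Conf n → Conf n :=
  fun x i =>
    if h : (i : ℕ) < n / 2 then
      x ⟨(i : ℕ) + n / 2, by have h2 := Nat.even_iff.mp hn; omega⟩
    else
      x ⟨(i : ℕ) - n / 2, by have := i.isLt; omega⟩


/-!
A simulation of `(F, W)` by a network with `k` extra automata yields a `2 ^ k`-colouring of
`G_NECC(F, W)`: colour `x` by the final state of the extra automata in the run started from `x`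
(padded by `false`). If `x, x'` are confusable at block `i` and get the same colour, consider the
step `T` of the extended schedule at which the original automata of blocks `≥ i` are not yet
updated. At step `T` every automaton of the big network holds the same value in both runs: the
already updated ones hold their final values (equal to `F x = F x'` on the originals, equal by
the colour on the extra ones), the others their initial values (`x = x'` there). Hence the final
states agree and `F x = F x'`. Since `n` copies updated first always simulate, `κ` is attained
and `χ ≤ 2 ^ κ`.

For the swap network the `2 ^ (n/2)` configurations vanishing on the second half form a clique:
after updating the first half they are all zero, while `F` is injective.
-/

section Schedule

variable {m : ℕ} {W : List (Finset (Fin m))}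

lemma mem_foldr_union_iff {L : List (Finset (Fin m))} {v : Fin m} :
    v ∈ L.foldr (· ∪ ·) ∅ ↔ ∃ B ∈ L, v ∈ B := by
  induction L with
  | nil => simp
  | cons B L ih => simp [ih]

lemma stepOf_eq_of_mem (hW : isSchedule W) {v : Fin m} {j : ℕ} (hj : j < W.length)
    (hv : v ∈ W[j]) : stepOf W v = j := by
  refine (List.findIdx_eq hj).mpr ⟨decide_eq_true hv, fun j' hj' => decide_eq_false fun hv' => ?_⟩
  exact Finset.disjoint_left.mp (List.pairwise_iff_getElem.mp hW.2.1 j' j _ hj hj') hv' hv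

lemma stepOf_lt_length (hW : isSchedule W) (v : Fin m) : stepOf W v < W.length := by
  obtain ⟨B, hB, hvB⟩ := mem_foldr_union_iff.mp (hW.2.2 ▸ Finset.mem_univ v)
  exact List.findIdx_lt_length_of_exists ⟨B, hB, decide_eq_true hvB⟩

lemma mem_getElem_iff (hW : isSchedule W) {v : Fin m} {j : ℕ} (hj : j < W.length) :
    v ∈ W[j] ↔ stepOf W v = j := by
  refine ⟨stepOf_eq_of_mem hW hj, ?_⟩
  rintro rfl
  exact of_decide_eq_true (List.findIdx_getElem (w := stepOf_lt_length hW v))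

lemma mem_prefUnion_iff (hW : isSchedule W) {v : Fin m} {i : ℕ} :
    v ∈ prefUnion W i ↔ stepOf W v < i := by
  simp only [prefUnion, mem_foldr_union_iff, List.mem_take_iff_getElem]
  constructor
  · rintro ⟨_, ⟨j, hj, rfl⟩, hv⟩
    have := stepOf_eq_of_mem hW _ hv
    omega
  · intro hv
    exact ⟨_, ⟨stepOf W v, lt_min hv (stepOf_lt_length hW v), rfl⟩,
      (mem_getElem_iff hW _).mpr rfl⟩

lemma updSet_prefUnion_apply (hW : isSchedule W) (F : Conf m → Conf m) (i : ℕ) (x : Conf m)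
    (v : Fin m) :
    updSet F (prefUnion W i) x v = if stepOf W v < i then F x v else x v := by
  simp only [updSet, mem_prefUnion_iff hW]

lemma runSched_append (F : Conf m → Conf m) (L L' : List (Finset (Fin m))) (z : Conf m) :
    runSched F (L ++ L') z = runSched F L' (runSched F L z) :=
  List.foldl_append

lemma runSched_take_apply' (hW : isSchedule W) (F : Conf m → Conf m) (z : Conf m)
    (v : Fin m) (s : ℕ) :
    runSched F (W.take s) z v =
      if s ≤ stepOf W v then z v else F (runSched F (W.take (stepOf W v)) z) v := by
  induction s with
  | zero => simp [runSched]
  | succ s ih =>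
    rcases Nat.lt_or_ge s W.length with hs | hs
    · rw [List.take_succ_eq_append_getElem hs, runSched_append]
      simp only [runSched, List.foldl_cons, List.foldl_nil, updSet, mem_getElem_iff hW hs]
      split_ifs at ih ⊢ <;> first | omega | subst_vars; rfl | exact ih
    · have := stepOf_lt_length hW v
      have htake : W.take (s + 1) = W.take s := by
        rw [List.take_of_length_le (by omega), List.take_of_length_le hs]
      rw [htake, ih, if_neg (by omega), if_neg (by omega)]

lemma runSched_apply (hW : isSchedule W) (F : Conf m → Conf m) (z : Conf m) (v : Fin m) :
    runSched F W z v = F (runSched F (W.take (stepOf W v)) z) v := by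
  have := runSched_take_apply' hW F z v W.length
  rwa [List.take_length, if_neg (not_le.mpr (stepOf_lt_length hW v))] at this

lemma runSched_take_apply (hW : isSchedule W) (F : Conf m → Conf m) (z : Conf m) (v : Fin m)
    (s : ℕ) : runSched F (W.take s) z v = if s ≤ stepOf W v then z v else runSched F W z v := by
  rw [runSched_take_apply' hW, runSched_apply hW]

end Schedule

section Simulation

variable {n k : ℕ} {W : List (Finset (Fin n))} {W' : List (Finset (Fin (n + k)))}
  {h : Fin n → Fin (n + k)}

lemma exists_threshold_of_extendsSched (hW' : isSchedule W') (hext : extendsSched W W' h)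
    (i : ℕ) : ∃ T, ∀ v, stepOf W v < i ↔ stepOf W' (h v) < T := by
  classical
  by_cases hlate : ∃ v, i ≤ stepOf W v
  · obtain ⟨v₀, hv₀, hmin⟩ := (Finset.univ.filter fun v => i ≤ stepOf W v).exists_min_image
      (stepOf W) (by simpa [Finset.filter_nonempty_iff] using hlate)
    simp only [Finset.mem_filter, Finset.mem_univ, true_and] at hv₀ hmin
    refine ⟨stepOf W' (h v₀), fun v => ?_⟩
    rw [← not_le, ← not_le, ← hext]
    constructor
    · intro hv hle
      omega
    · intro hnot hv
      exact hnot (hmin v (by omega))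
  · push Not at hlate
    exact ⟨W'.length, fun v => iff_of_true (hlate v) (stepOf_lt_length hW' _)⟩

lemma colorable_of_simulates (hW : isSchedule W) (hinj : Function.Injective h)
    (hW' : isSchedule W') (hext : extendsSched W W' h) {F : Conf n → Conf n}
    {F' : Conf (n + k) → Conf (n + k)} (hsim : simulates F' W' F h) :
    (gnecc F W).Colorable (2 ^ k) := by
  classical
  let pad (x : Conf n) : Conf (n + k) := Function.extend h x fun _ => false
  have hpad (x : Conf n) (i : Fin n) : pad x (h i) = x i := hinj.extend_apply _ _ _
  have hpad_out (x : Conf n) {v} (hv : v ∉ Set.range h) : pad x v = false :=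
    Function.extend_apply' _ _ _ hv
  have hrun (x : Conf n) (i : Fin n) : runSched F' W' (pad x) (h i) = F x i := by
    calc runSched F' W' (pad x) (h i) = F (fun i => pad x (h i)) i := congrFun (hsim (pad x)) i
      _ = F x i := by simp only [hpad]
  let C (x : Conf n) : {v // v ∉ Set.range h} → Bool := fun v => runSched F' W' (pad x) v
  have hcard : Fintype.card ({v // v ∉ Set.range h} → Bool) = 2 ^ k := by
    rw [Fintype.card_fun, Fintype.card_bool, Fintype.card_subtype_compl, Fintype.card_fin,
      Set.card_range_of_injective hinj, Fintype.card_fin, Nat.add_sub_cancel_left]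
  refine hcard ▸ (SimpleGraph.Coloring.mk C ?_).colorable
  rintro x x' ⟨hne, i, -, hconf⟩ hC
  apply hne
  have hagree (v : Fin n) := congrFun hconf v
  simp only [updSet_prefUnion_apply hW] at hagree
  obtain ⟨T, hTiff⟩ := exists_threshold_of_extendsSched hW' hext i
  have hstate : runSched F' (W'.take T) (pad x) = runSched F' (W'.take T) (pad x') := by
    funext v
    rw [runSched_take_apply hW', runSched_take_apply hW']
    by_cases hv : v ∈ Set.range h
    · obtain ⟨j, rfl⟩ := hv
      have := hagree j
      simp only [hTiff] at this
      by_cases hlate : T ≤ stepOf W' (h j)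
      · rw [if_neg (not_lt.mpr hlate), if_neg (not_lt.mpr hlate)] at this
        rw [if_pos hlate, if_pos hlate, hpad, hpad, this]
      · rw [if_pos (not_le.mp hlate), if_pos (not_le.mp hlate)] at this
        rw [if_neg hlate, if_neg hlate, hrun, hrun, this]
    · split_ifs
      · rw [hpad_out x hv, hpad_out x' hv]
      · exact congrFun hC ⟨v, hv⟩
  have hfinal : runSched F' W' (pad x) = runSched F' W' (pad x') := by
    rw [← List.take_append_drop T W', runSched_append, runSched_append, hstate]
  funext j
  rw [← hrun, ← hrun, hfinal]

end Simulation

section Copy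

variable {n : ℕ} {W : List (Finset (Fin n))}

lemma castAdd_ne_natAdd (i j : Fin n) : Fin.castAdd n i ≠ Fin.natAdd n j := by
  intro h
  have := congrArg Fin.val h
  simp only [Fin.val_castAdd, Fin.val_natAdd] at this
  omega

/-- The automata `Fin.natAdd n i` are copies, all updated in the first block so that they save
the initial state; the original automata then apply `F` to the saved state. -/
def copyNet (F : Conf n → Conf n) : Conf (n + n) → Conf (n + n) :=
  fun z => Fin.append (F fun i => z (Fin.natAdd n i)) fun i => z (Fin.castAdd n i)

def copySched (W : List (Finset (Fin n))) : List (Finset (Fin (n + n))) :=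
  Finset.univ.map (Fin.natAddEmb n) :: W.map (Finset.map (Fin.castAddEmb n))

lemma isSchedule_copySched (hW : isSchedule W) (hn : 0 < n) : isSchedule (copySched W) := by
  obtain ⟨hne, hdisj, hcover⟩ := hW
  refine ⟨?_, ?_, ?_⟩
  · simp only [copySched, List.mem_cons, List.mem_map]
    rintro _ (rfl | ⟨B, hB, rfl⟩)
    · exact (Finset.univ_nonempty_iff.mpr ⟨⟨0, hn⟩⟩).map
    · exact (hne B hB).map
  · refine List.pairwise_cons.mpr ⟨?_, List.pairwise_map.mpr (hdisj.imp ?_)⟩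
    · simp only [List.mem_map, Finset.disjoint_left, Finset.mem_map]
      rintro _ ⟨B, -, rfl⟩ _ ⟨i, -, rfl⟩ hmem
      obtain ⟨j, -, hji⟩ := Finset.mem_map.mp hmem
      exact castAdd_ne_natAdd j i hji
    · exact fun hd => (Finset.disjoint_map _).mpr hd
  · ext v
    simp only [copySched, List.foldr_cons, Finset.mem_union, mem_foldr_union_iff, List.mem_map,
      Finset.mem_univ, iff_true]
    induction v using Fin.addCases with
    | left i =>
      obtain ⟨B, hB, hiB⟩ := mem_foldr_union_iff.mp (hcover ▸ Finset.mem_univ i)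
      exact Or.inr ⟨_, ⟨B, hB, rfl⟩, Finset.mem_map_of_mem _ hiB⟩
    | right i => exact Or.inl (Finset.mem_map_of_mem _ (Finset.mem_univ i))

lemma stepOf_copySched_natAdd (hW : isSchedule W) (hn : 0 < n) (i : Fin n) :
    stepOf (copySched W) (Fin.natAdd n i) = 0 :=
  stepOf_eq_of_mem (isSchedule_copySched hW hn) (by simp [copySched])
    (Finset.mem_map_of_mem _ (Finset.mem_univ i))

lemma stepOf_copySched_castAdd (hW : isSchedule W) (hn : 0 < n) (i : Fin n) :
    stepOf (copySched W) (Fin.castAdd n i) = stepOf W i + 1 := by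
  have hlt := stepOf_lt_length hW i
  refine stepOf_eq_of_mem (isSchedule_copySched hW hn) (by simpa [copySched]) ?_
  simpa [copySched] using (mem_getElem_iff hW hlt).mpr rfl

lemma extendsSched_copySched (hW : isSchedule W) (hn : 0 < n) :
    extendsSched W (copySched W) (Fin.castAdd n) := by
  intro i i'
  rw [stepOf_copySched_castAdd hW hn, stepOf_copySched_castAdd hW hn]
  omega

lemma simulates_copyNet (hW : isSchedule W) (hn : 0 < n) (F : Conf n → Conf n) :
    simulates (copyNet F) (copySched W) F (Fin.castAdd n) := by
  have hW' := isSchedule_copySched hW hn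
  intro z
  funext i
  rw [runSched_apply hW', stepOf_copySched_castAdd hW hn]
  simp only [copyNet, Fin.append_left]
  congr 1
  funext j
  rw [runSched_take_apply hW', if_neg (by rw [stepOf_copySched_natAdd hW hn]; omega),
    runSched_apply hW', stepOf_copySched_natAdd hW hn]
  simp only [runSched, List.take_zero, List.foldl_nil, copyNet, Fin.append_right]

end Copy

theorem chromaticNumber_gnecc_le_two_pow_kappa {n : ℕ} {W : List (Finset (Fin n))}
    (hW : isSchedule W) (hn : 0 < n) (F : Conf n → Conf n) :
    (gnecc F W).chromaticNumber ≤ ((2 ^ kappa F W : ℕ) : ℕ∞) := by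
  obtain ⟨h, hinj, W', hW', hext, F', hsim⟩ : kappa F W ∈ _ := Nat.sInf_mem
    ⟨n, Fin.castAdd n, Fin.castAdd_injective n n, copySched W, isSchedule_copySched hW hn,
      extendsSched_copySched hW hn, copyNet F, simulates_copyNet hW hn F⟩
  exact (colorable_of_simulates hW hinj hW' hext hsim).chromaticNumber_le

lemma isSchedule_seqSched (n : ℕ) : isSchedule (seqSched n) := by
  refine ⟨?_, ?_, ?_⟩
  · simp [seqSched]
  · refine List.pairwise_map.mpr ((List.nodup_finRange n).imp fun hij => ?_)
    exact Finset.disjoint_singleton.mpr hij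
  · ext v
    simp only [mem_foldr_union_iff, seqSched, List.mem_map, Finset.mem_univ, iff_true]
    exact ⟨_, ⟨v, List.mem_finRange v, rfl⟩, Finset.mem_singleton_self v⟩

lemma stepOf_seqSched {n : ℕ} (i : Fin n) : stepOf (seqSched n) i = i :=
  stepOf_eq_of_mem (isSchedule_seqSched n) (by simp [seqSched]) (by simp [seqSched])

section Swap

variable {n : ℕ}

lemma swapF_involutive (hn : Even n) : Function.Involutive (swapF n hn) := by
  have := Nat.even_iff.mp hn
  intro x
  funext i
  by_cases hi : (i : ℕ) < n / 2
  · simp only [swapF, dif_pos hi, dif_neg (show ¬ (i : ℕ) + n / 2 < n / 2 by omega),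
      Nat.add_sub_cancel]
  · have := i.isLt
    simp only [swapF, dif_neg hi, dif_pos (show (i : ℕ) - n / 2 < n / 2 by omega),
      Nat.sub_add_cancel (not_lt.mp hi)]

def zeroPad (n : ℕ) (y : Fin (n / 2) → Bool) : Conf n :=
  fun i => if h : (i : ℕ) < n / 2 then y ⟨i, h⟩ else false

lemma zeroPad_injective (n : ℕ) : Function.Injective (zeroPad n) := by
  intro y y' h
  funext j
  simpa [zeroPad] using congrFun h ⟨j, by omega⟩

lemma updSet_prefUnion_half_zeroPad (hn : Even n) (y : Fin (n / 2) → Bool) :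
    updSet (swapF n hn) (prefUnion (seqSched n) (n / 2)) (zeroPad n y) = fun _ => false := by
  funext i
  rw [updSet_prefUnion_apply (isSchedule_seqSched n), stepOf_seqSched]
  split_ifs with hi
  · simp [swapF, zeroPad, hi]
  · simp [zeroPad, hi]

lemma isClique_range_zeroPad (hn : Even n) :
    (gnecc (swapF n hn) (seqSched n)).IsClique (Set.range (zeroPad n)) := by
  rintro _ ⟨y, rfl⟩ _ ⟨y', rfl⟩ hne
  refine ⟨(swapF_involutive hn).injective.ne hne, n / 2, ?_, ?_⟩
  · simpa [seqSched] using Nat.div_le_self n 2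
  · rw [updSet_prefUnion_half_zeroPad, updSet_prefUnion_half_zeroPad]

lemma two_pow_le_chromaticNumber_gnecc_swapF (hn : Even n) :
    ((2 ^ (n / 2) : ℕ) : ℕ∞) ≤ (gnecc (swapF n hn) (seqSched n)).chromaticNumber := by
  let s := Finset.univ.map ⟨zeroPad n, zeroPad_injective n⟩
  have hs : (s : Set (Conf n)) = Set.range (zeroPad n) := by simp [s]
  have hcard : s.card = 2 ^ (n / 2) := by simp [s]
  exact hcard ▸ (hs ▸ isClique_range_zeroPad hn).card_le_chromaticNumber

end Swap

theorem stmt4 {n : ℕ} (hn : Even n) :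
    ((2 ^ (n / 2) : ℕ) : ℕ∞) ≤ (gnecc (swapF n hn) (seqSched n)).chromaticNumber ∧
    n / 2 ≤ kappa (swapF n hn) (seqSched n) := by
  have hχ := two_pow_le_chromaticNumber_gnecc_swapF hn
  refine ⟨hχ, ?_⟩
  rcases Nat.eq_zero_or_pos (n / 2) with hzero | hpos
  · exact hzero ▸ Nat.zero_le _
  · have := hχ.trans (chromaticNumber_gnecc_le_two_pow_kappa (isSchedule_seqSched n)
      (by omega) (swapF n hn))
    exact (Nat.pow_le_pow_iff_right one_lt_two).mp (by exact_mod_cast this)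
end

section
/- For any BAN F: B^n → B^n and block-sequential update schedule W, the clique number of the NECC graph satisfies ω(G_NECC(F,W)) ≤ 2^{⌊n/2⌋}. -/
/-! In a clique of `G_NECC(F, W)` all pairwise confusion steps can be replaced by a single
common step `i`: the members agree outside `W_{<i}` and their images agree on `W_{<i}`.
Since the members have pairwise distinct images, the clique injects both into the
configurations of `W_{<i}` and into those of its complement, so its size is at most
`2 ^ min (|W_{<i}|, n - |W_{<i}|) ≤ 2 ^ (n / 2)`. -/

open Finset

theorem exists_mem_ne_and_ne {α β γ : Type*} {S : Set α} {f : α → β} {g : α → γ}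
    (hf : ∃ x ∈ S, ∃ y ∈ S, f x ≠ f y) (hg : ∃ u ∈ S, ∃ v ∈ S, g u ≠ g v) :
    ∃ s ∈ S, ∃ t ∈ S, f s ≠ f t ∧ g s ≠ g t := by
  obtain ⟨x, hx, y, hy, hxy⟩ := hf
  obtain ⟨u, hu, v, hv, huv⟩ := hg
  by_cases hfuv : f u = f v
  · obtain ⟨z, hz, hzu⟩ : ∃ z ∈ S, f z ≠ f u := by
      by_cases h : f x = f u
      · exact ⟨y, hy, fun h' => hxy (h.trans h'.symm)⟩
      · exact ⟨x, hx, h⟩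
    by_cases hgz : g z = g u
    · exact ⟨z, hz, v, hv, by rwa [← hfuv], by rwa [hgz]⟩
    · exact ⟨z, hz, u, hu, hzu, hgz⟩
  · exact ⟨u, hu, v, hv, hfuv, huv⟩

theorem card_le_pow_card_of_eq_off {ι β : Type*} [Fintype β] (s : Finset (ι → β))
    (P : Finset ι) (h : ∀ x ∈ s, ∀ y ∈ s, ∀ a ∉ P, x a = y a) :
    #s ≤ Fintype.card β ^ #P := by
  classical
  have hres : Set.InjOn (fun (x : ι → β) (a : P) => x a) s := by
    intro x hx y hy hxy
    funext a
    by_cases ha : a ∈ P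
    · exact congrFun hxy ⟨a, ha⟩
    · exact h x hx y hy a ha
  calc #s ≤ #(univ : Finset (P → β)) :=
        card_le_card_of_injOn _ (fun _ _ => mem_univ _) hres
    _ = Fintype.card β ^ #P := by simp

theorem mem_foldr_union {α : Type*} [DecidableEq α] {l : List (Finset α)} {a : α} :
    a ∈ l.foldr (· ∪ ·) ∅ ↔ ∃ B ∈ l, a ∈ B := by
  induction l <;> simp [*]

section Confusion

variable {n : ℕ} {F : Conf n → Conf n} {W : List (Finset (Fin n))}

theorem prefUnion_mono : Monotone (prefUnion W) := by
  intro i j hij a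
  simp only [prefUnion, mem_foldr_union]
  rintro ⟨B, hB, ha⟩
  exact ⟨B, (List.take_prefix_take_left hij).subset hB, ha⟩

theorem updSet_eq_updSet_iff {P : Finset (Fin n)} {x y : Conf n} :
    updSet F P x = updSet F P y ↔ (∀ a ∈ P, F x a = F y a) ∧ ∀ a ∉ P, x a = y a := by
  simp only [updSet, funext_iff]
  constructor
  · intro h
    exact ⟨fun a ha => by simpa [ha] using h a, fun a ha => by simpa [ha] using h a⟩
  · rintro ⟨hP, hPc⟩ a
    split_ifs with ha
    exacts [hP a ha, hPc a ha]

theorem exists_common_step_of_isClique {s : Set (Conf n)} (hs : (gnecc F W).IsClique s) :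
    ∃ i, (∀ x ∈ s, ∀ y ∈ s, ∀ a ∉ prefUnion W i, x a = y a) ∧
      ∀ x ∈ s, ∀ y ∈ s, ∀ a ∈ prefUnion W i, F x a = F y a := by
  classical
  have hstep : ∀ x ∈ s, ∀ y ∈ s, x ≠ y → ∃ i ≤ W.length,
      (∀ a ∈ prefUnion W i, F x a = F y a) ∧ ∀ a ∉ prefUnion W i, x a = y a := by
    intro x hx y hy hxy
    obtain ⟨-, i, hi, h⟩ := hs hx hy hxy
    exact ⟨i, hi, updSet_eq_updSet_iff.mp h⟩
  let AgreeOff (i : ℕ) : Prop := ∀ x ∈ s, ∀ y ∈ s, ∀ a ∉ prefUnion W i, x a = y a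
  have hex : ∃ i, AgreeOff i := by
    refine ⟨W.length, fun x hx y hy a ha => ?_⟩
    obtain rfl | hxy := eq_or_ne x y
    · rfl
    obtain ⟨i, hi, -, hoff⟩ := hstep x hx y hy hxy
    exact hoff a fun h => ha (prefUnion_mono hi h)
  refine ⟨Nat.find hex, Nat.find_spec hex, fun u hu v hv a ha => ?_⟩
  by_contra hFa
  obtain ⟨j, hj⟩ : ∃ j, Nat.find hex = j + 1 :=
    Nat.exists_eq_succ_of_ne_zero fun h => by simp [h, prefUnion] at ha
  have hj' : ¬AgreeOff j := Nat.find_min hex (by omega)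
  simp only [AgreeOff, not_forall] at hj'
  obtain ⟨x, hx, y, hy, b, hb, hxy⟩ := hj'
  -- a pair of the clique distinguished both at `b ∉ W_{<j}` and, after `F`, at `a ∈ W_{<j+1}`
  obtain ⟨z, hz, w, hw, hzw, hFzw⟩ := exists_mem_ne_and_ne (f := fun x => x b)
    (g := fun x => F x a) ⟨x, hx, y, hy, hxy⟩ ⟨u, hu, v, hv, hFa⟩
  obtain ⟨i, -, hon, hoff⟩ := hstep z hz w hw fun h => hzw (h ▸ rfl)
  have hbi : b ∈ prefUnion W i := by_contra fun h => hzw (hoff b h)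
  have hji : j + 1 ≤ i := by
    by_contra h
    exact hb (prefUnion_mono (by omega) hbi)
  exact hFzw (hon a (prefUnion_mono (hj ▸ hji) ha))

end Confusion

theorem stmt13_general {n : ℕ} (F : Conf n → Conf n) (W : List (Finset (Fin n))) :
    (gnecc F W).cliqueNum ≤ 2 ^ (n / 2) := by
  classical
  obtain ⟨s, hs⟩ := (gnecc F W).exists_isNClique_cliqueNum
  obtain ⟨i, hoff, hon⟩ := exists_common_step_of_isClique hs.isClique
  set P := prefUnion W i
  have hF : Set.InjOn F s := fun x hx y hy hxy =>
    by_contra fun hne => (hs.isClique hx hy hne).1 hxy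
  have h₁ : #s ≤ 2 ^ #P := by simpa using card_le_pow_card_of_eq_off s P hoff
  have h₂ : #s ≤ 2 ^ (n - #P) := by
    have himg := card_le_pow_card_of_eq_off (s.image F) Pᶜ (by
      simp only [mem_image, mem_compl, not_not]
      rintro _ ⟨x, hx, rfl⟩ _ ⟨y, hy, rfl⟩
      exact hon x hx y hy)
    simpa [card_image_of_injOn hF, card_compl] using himg
  have hP : #P ≤ n := by simpa using card_le_univ P
  rw [← hs.card_eq]
  rcases le_or_gt #P (n / 2) with h | h
  · exact h₁.trans (Nat.pow_le_pow_right two_pos h)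
  · exact h₂.trans (Nat.pow_le_pow_right two_pos (by omega))

theorem stmt13 {n : ℕ} (F : Conf n → Conf n) (W : List (Finset (Fin n)))
    (hW : isSchedule W) :
    (gnecc F W).cliqueNum ≤ 2 ^ (n / 2) :=
  stmt13_general F W
end
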